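/- Let d ∈ {1,...,N}, let m_d be a regular moment sequence of order s_d > 0, and let e_d ∈ ℕ^N denote the multi-index with 1 in the d-th coordinate and 0 elsewhere. Then there exists a constant C > 0 (depending only on m_d) such that for every f analytic on the polydisc D_{ρ₁,...,ρ_N}, every α ∈ [1,∞)^N, every s = (s₁,...,s_N) with s_d the order of m_d and all components positive, and every 0 < r < min(ρ₁,...,ρ_N): ‖∂_{m_d;x_d} f‖_{α+e_d,r,s} ≤ C · α_d^{s_d} · ‖f‖_{α,r,s}. -/

import Mathlib

/-- A regular moment sequence of order `s > 0`. -/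
def IsRegularMomentSeq (m : ℕ → ℝ) (s : ℝ) : Prop :=
  m 0 = 1 ∧ (∀ j, 0 < m j) ∧
    ∃ a A : ℝ, 0 < a ∧ 0 < A ∧ ∀ j : ℕ,
      a * ((j : ℝ) + 1) ^ s ≤ m (j + 1) / m j ∧ m (j + 1) / m j ≤ A * ((j : ℝ) + 1) ^ s

/-- Generalized binomial coefficient `binom(α+j−1, j) = (∏_{i=0}^{j−1}(α+i))/j!`. -/
noncomputable def genBinom (α : ℝ) (j : ℕ) : ℝ :=
  (∏ i ∈ Finset.range j, (α + i)) / (j.factorial : ℝ)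

/-- Taylor coefficients of an analytic function on the polydisc `D_{ρ₁,...,ρ_N}`. -/
def AnalyticCoeffs {N : ℕ} (ρ : Fin N → ℝ) (f : (Fin N → ℕ) → ℂ) : Prop :=
  ∀ r : Fin N → ℝ, (∀ d, 0 ≤ r d) → (∀ d, r d < ρ d) →
    Summable fun J : Fin N → ℕ => ‖f J‖ * ∏ d, r d ^ J d

/-- The majorization set defining the modified Nagumo norm for `α ≠ 0`. -/
def nagumoSet {N : ℕ} (f : (Fin N → ℕ) → ℂ) (α : Fin N → ℝ) (r : ℝ) (s : Fin N → ℝ) :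
    Set ℝ :=
  {A : ℝ | 0 ≤ A ∧ ∀ J : Fin N → ℕ,
    ‖f J‖ ≤ A * ∏ d, r ^ (-(α d)) * genBinom (α d) (J d) ^ s d * (r ^ J d)⁻¹}

open Classical in
/-- The modified Nagumo norm `‖f‖_{α,r,s}`. -/
noncomputable def nagumoNorm {N : ℕ} (f : (Fin N → ℕ) → ℂ) (α : Fin N → ℝ) (r : ℝ)
    (s : Fin N → ℝ) : ℝ :=
  if α = 0 then ∑' J : Fin N → ℕ, ‖f J‖ * r ^ (∑ d, J d)
  else sInf (nagumoSet f α r s)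

/-- Moment derivative with respect to the variable `x_d`, acting coefficientwise:
the coefficient of `x^J` in `∂_{m_d;x_d} f` is `f_{J+e_d} · m_d(J_d+1)/m_d(J_d)`. -/
noncomputable def momentDerivX {N : ℕ} (d : Fin N) (m : ℕ → ℝ)
    (f : (Fin N → ℕ) → ℂ) : (Fin N → ℕ) → ℂ :=
  fun J => f (J + Pi.single d 1) * ((m (J d + 1) / m (J d) : ℝ) : ℂ)

/-!
The weight of `x^J` in the majorant `∏_d r^{-α_d} Θ_{α_d,s_d}(x_d/r)` is
`∏_d r^{-α_d} binom(α_d+J_d-1, J_d)^{s_d} r^{-J_d}`. Shifting both `J` and `α` by `e_d` leaves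
the power of `r` unchanged, and the binomial coefficients are related by
`binom(α+j, j+1) (j+1) = α binom(α+j, j)`. Hence the factor `m_d(j+1)/m_d(j) ≤ A (j+1)^{s_d}`
produced by the moment derivative is absorbed at the cost of `A α_d^{s_d}`: every majorant
constant of `f` of order `α`, multiplied by `A α_d^{s_d}`, is a majorant constant of
`∂_{m_d;x_d} f` of order `α + e_d`.
-/

open Finset

lemma genBinom_nonneg {α : ℝ} (hα : 0 ≤ α) (j : ℕ) : 0 ≤ genBinom α j :=
  div_nonneg (prod_nonneg fun i _ => by positivity) (Nat.cast_nonneg _)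

lemma one_le_genBinom {α : ℝ} (hα : 1 ≤ α) (j : ℕ) : 1 ≤ genBinom α j := by
  rw [genBinom, le_div_iff₀ (by exact_mod_cast j.factorial_pos), one_mul,
    ← prod_range_add_one_eq_factorial, Nat.cast_prod]
  gcongr with i
  push_cast
  linarith

lemma genBinom_succ_mul (α : ℝ) (j : ℕ) :
    genBinom α (j + 1) * ((j : ℝ) + 1) = α * genBinom (α + 1) j := by
  have hprod : ∏ i ∈ range (j + 1), (α + i) = α * ∏ i ∈ range j, (α + 1 + i) := by
    rw [prod_range_succ', Nat.cast_zero, add_zero, mul_comm]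
    congr 1
    exact prod_congr rfl fun i _ => by push_cast; ring
  have hfact : (j.factorial : ℝ) ≠ 0 := by positivity
  rw [genBinom, genBinom, hprod, Nat.factorial_succ]
  push_cast
  field_simp

noncomputable def nagumoFactor (α r s : ℝ) (j : ℕ) : ℝ :=
  r ^ (-α) * genBinom α j ^ s * (r ^ j)⁻¹

lemma mem_nagumoSet_iff {N : ℕ} {f : (Fin N → ℕ) → ℂ} {α : Fin N → ℝ} {r : ℝ}
    {s : Fin N → ℝ} {A : ℝ} : A ∈ nagumoSet f α r s ↔
      0 ≤ A ∧ ∀ J, ‖f J‖ ≤ A * ∏ e, nagumoFactor (α e) r (s e) (J e) :=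
  Iff.rfl

lemma nagumoFactor_nonneg {α r : ℝ} (hα : 0 ≤ α) (hr : 0 < r) (s : ℝ) (j : ℕ) :
    0 ≤ nagumoFactor α r s j := by
  have := genBinom_nonneg hα j
  unfold nagumoFactor
  positivity

lemma inv_pow_le_rpow_mul_nagumoFactor {α r s : ℝ} (hα : 1 ≤ α) (hr : 0 < r) (hs : 0 ≤ s)
    (j : ℕ) : (r ^ j)⁻¹ ≤ r ^ α * nagumoFactor α r s j := by
  have hbinom : 1 ≤ genBinom α j ^ s := Real.one_le_rpow (one_le_genBinom hα j) hs
  have hcancel : r ^ α * r ^ (-α) = 1 := by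
    rw [← Real.rpow_add hr, add_neg_cancel, Real.rpow_zero]
  calc (r ^ j)⁻¹ ≤ genBinom α j ^ s * (r ^ j)⁻¹ :=
        le_mul_of_one_le_left (by positivity) hbinom
    _ = r ^ α * nagumoFactor α r s j := by
      rw [nagumoFactor, ← mul_assoc, ← mul_assoc, hcancel, one_mul]

lemma nagumoFactor_succ_mul_le {α r s A q : ℝ} (hα : 0 ≤ α) (hr : 0 < r) {j : ℕ}
    (hq : q ≤ A * ((j : ℝ) + 1) ^ s) :
    nagumoFactor α r s (j + 1) * q ≤ A * α ^ s * nagumoFactor (α + 1) r s j := by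
  have hbinom := genBinom_nonneg hα (j + 1)
  have hbinom' := genBinom_nonneg (α := α + 1) (by linarith) j
  have hpow : r ^ (-α) * (r ^ (j + 1))⁻¹ = r ^ (-(α + 1)) * (r ^ j)⁻¹ := by
    rw [pow_succ, mul_inv, neg_add, Real.rpow_add hr, Real.rpow_neg_one]
    ring
  have hbinom_rpow :
      genBinom α (j + 1) ^ s * ((j : ℝ) + 1) ^ s = α ^ s * genBinom (α + 1) j ^ s := by
    rw [← Real.mul_rpow hbinom (by positivity), genBinom_succ_mul, Real.mul_rpow hα hbinom']
  calc nagumoFactor α r s (j + 1) * q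
      ≤ nagumoFactor α r s (j + 1) * (A * ((j : ℝ) + 1) ^ s) :=
        mul_le_mul_of_nonneg_left hq (nagumoFactor_nonneg hα hr s _)
    _ = A * (r ^ (-α) * (r ^ (j + 1))⁻¹) * (genBinom α (j + 1) ^ s * ((j : ℝ) + 1) ^ s) := by
        unfold nagumoFactor; ring
    _ = A * α ^ s * nagumoFactor (α + 1) r s j := by
        rw [hpow, hbinom_rpow, nagumoFactor]; ring

lemma prod_mul_le_mul_prod_of_eq_off {ι : Type*} [Fintype ι] [DecidableEq ι] (d : ι)
    {a b : ι → ℝ} {q c : ℝ} (hd : a d * q ≤ c * b d) (heq : ∀ e ≠ d, a e = b e)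
    (hnonneg : ∀ e ≠ d, 0 ≤ b e) : (∏ e, a e) * q ≤ c * ∏ e, b e := by
  have hrest : ∏ e ∈ {d}ᶜ, a e = ∏ e ∈ {d}ᶜ, b e :=
    prod_congr rfl fun e he => heq e (by simpa using he)
  have hrest_nonneg : 0 ≤ ∏ e ∈ {d}ᶜ, b e :=
    prod_nonneg fun e he => hnonneg e (by simpa using he)
  rw [Fintype.prod_eq_mul_prod_compl d, Fintype.prod_eq_mul_prod_compl d b, hrest]
  calc a d * (∏ e ∈ {d}ᶜ, b e) * q = a d * q * ∏ e ∈ {d}ᶜ, b e := by ring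
    _ ≤ c * b d * ∏ e ∈ {d}ᶜ, b e := mul_le_mul_of_nonneg_right hd hrest_nonneg
    _ = c * (b d * ∏ e ∈ {d}ᶜ, b e) := by ring

lemma nagumoSet_nonempty {N : ℕ} {ρ : Fin N → ℝ} {f : (Fin N → ℕ) → ℂ}
    (hf : AnalyticCoeffs ρ f) {α : Fin N → ℝ} (hα : ∀ e, 1 ≤ α e) {r : ℝ} (hr : 0 < r)
    (hrρ : ∀ e, r < ρ e) {s : Fin N → ℝ} (hs : ∀ e, 0 ≤ s e) :
    (nagumoSet f α r s).Nonempty := by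
  have hsum := hf (fun _ => r) (fun _ => hr.le) hrρ
  set M := ∑' J, ‖f J‖ * ∏ e, r ^ J e
  have hM : 0 ≤ M := tsum_nonneg fun J => by positivity
  refine ⟨M * ∏ e, r ^ α e, by positivity, fun J => ?_⟩
  have hcoeff : ‖f J‖ * ∏ e, r ^ J e ≤ M := hsum.le_tsum J fun _ _ => by positivity
  calc ‖f J‖ ≤ M * ∏ e, (r ^ J e)⁻¹ := by
        rw [prod_inv_distrib, ← div_eq_mul_inv, le_div_iff₀ (by positivity)]
        exact hcoeff
    _ ≤ M * ∏ e, (r ^ α e * nagumoFactor (α e) r (s e) (J e)) := by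
        gcongr with e
        exact inv_pow_le_rpow_mul_nagumoFactor (hα e) hr (hs e) (J e)
    _ = M * (∏ e, r ^ α e) * ∏ e, nagumoFactor (α e) r (s e) (J e) := by
        rw [prod_mul_distrib, mul_assoc]

lemma mul_mem_nagumoSet_momentDerivX {N : ℕ} (d : Fin N) {m : ℕ → ℝ} (hm : ∀ j, 0 < m j)
    {A : ℝ} (hA : 0 ≤ A) {s : Fin N → ℝ}
    (hbound : ∀ j : ℕ, m (j + 1) / m j ≤ A * ((j : ℝ) + 1) ^ s d)
    {f : (Fin N → ℕ) → ℂ} {α : Fin N → ℝ} (hα : ∀ e, 0 ≤ α e) {r : ℝ}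
    (hr : 0 < r) {B : ℝ} (hB : B ∈ nagumoSet f α r s) :
    A * α d ^ s d * B ∈ nagumoSet (momentDerivX d m f) (α + Pi.single d 1) r s := by
  set J' : (Fin N → ℕ) → Fin N → ℕ := fun J => J + Pi.single d 1
  set α' : Fin N → ℝ := α + Pi.single d 1
  rw [mem_nagumoSet_iff] at hB ⊢
  refine ⟨mul_nonneg (mul_nonneg hA (Real.rpow_nonneg (hα d) _)) hB.1, fun J => ?_⟩
  set q := m (J d + 1) / m (J d)
  have hq : 0 ≤ q := (div_pos (hm _) (hm _)).le
  have hnorm : ‖momentDerivX d m f J‖ = ‖f (J' J)‖ * q := by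
    rw [momentDerivX, norm_mul, Complex.norm_real, Real.norm_of_nonneg hq]
  have hweight : (∏ e, nagumoFactor (α e) r (s e) (J' J e)) * q
      ≤ A * α d ^ s d * ∏ e, nagumoFactor (α' e) r (s e) (J e) := by
    refine prod_mul_le_mul_prod_of_eq_off d ?_ (fun e he => ?_) (fun e he => ?_)
    · simpa [J', α'] using nagumoFactor_succ_mul_le (hα d) hr (hbound (J d))
    · simp [J', α', he]
    · simpa [α', he] using nagumoFactor_nonneg (hα e) hr (s e) (J e)
  calc ‖momentDerivX d m f J‖
      ≤ B * (∏ e, nagumoFactor (α e) r (s e) (J' J e)) * q := by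
        rw [hnorm]; exact mul_le_mul_of_nonneg_right (hB.2 _) hq
    _ ≤ B * (A * α d ^ s d * ∏ e, nagumoFactor (α' e) r (s e) (J e)) := by
        rw [mul_assoc]; exact mul_le_mul_of_nonneg_left hweight hB.1
    _ = A * α d ^ s d * B * ∏ e, nagumoFactor (α' e) r (s e) (J e) := by ring

lemma nagumoNorm_of_ne_zero {N : ℕ} (f : (Fin N → ℕ) → ℂ) {α : Fin N → ℝ}
    (hα : α ≠ 0) (r : ℝ) (s : Fin N → ℝ) : nagumoNorm f α r s = sInf (nagumoSet f α r s) :=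
  if_neg hα

open Pointwise in
lemma csInf_le_mul_csInf {S T : Set ℝ} {c : ℝ} (hc : 0 ≤ c) (hS : S.Nonempty)
    (hT : BddBelow T) (h : ∀ A ∈ S, c * A ∈ T) : sInf T ≤ c * sInf S := by
  rw [← smul_eq_mul, ← Real.sInf_smul_of_nonneg hc]
  exact csInf_le_csInf hT hS.smul_set (by rintro _ ⟨A, hA, rfl⟩; exact h A hA)

theorem nagumoNorm_momentDerivX_general (N : ℕ) (d : Fin N) (sd : ℝ)
    (m : ℕ → ℝ) (hm : IsRegularMomentSeq m sd) :
    ∃ C : ℝ, 0 < C ∧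
      ∀ (ρ : Fin N → ℝ), (∀ e, 0 < ρ e) →
      ∀ f : (Fin N → ℕ) → ℂ, AnalyticCoeffs ρ f →
      ∀ α : Fin N → ℝ, (∀ e, 1 ≤ α e) →
      ∀ s : Fin N → ℝ, (∀ e, 0 < s e) → s d = sd →
      ∀ r : ℝ, 0 < r → (∀ e, r < ρ e) →
        nagumoNorm (momentDerivX d m f) (α + Pi.single d 1) r s ≤
          C * α d ^ sd * nagumoNorm f α r s := by
  obtain ⟨-, hmpos, _, A, -, hA, hbound⟩ := hm
  refine ⟨A, hA, fun ρ _ f hf α hα s hs hsd r hr hrρ => ?_⟩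
  subst hsd
  have hα_nonneg : ∀ e, 0 ≤ α e := fun e => zero_le_one.trans (hα e)
  have hα_ne : α ≠ 0 := Function.ne_iff.mpr ⟨d, by simp; linarith [hα d]⟩
  have hα_succ_ne : α + Pi.single d 1 ≠ 0 :=
    Function.ne_iff.mpr ⟨d, by simp; linarith [hα d]⟩
  rw [nagumoNorm_of_ne_zero _ hα_ne, nagumoNorm_of_ne_zero _ hα_succ_ne]
  exact csInf_le_mul_csInf (mul_nonneg hA.le (Real.rpow_nonneg (hα_nonneg d) _))
    (nagumoSet_nonempty hf hα hr hrρ fun e => (hs e).le) ⟨0, fun _ hB => hB.1⟩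
    fun B hB => mul_mem_nagumoSet_momentDerivX d hmpos hA.le (fun j => (hbound j).2)
      hα_nonneg hr hB

/-- If `m_d` is a regular moment sequence of order `s_d > 0`, there is a constant `C > 0`
(depending only on `m_d`) such that
`‖∂_{m_d;x_d} f‖_{α+e_d,r,s} ≤ C · α_d^{s_d} · ‖f‖_{α,r,s}`
for all admissible `f`, `α ∈ [1,∞)^N`, `s` (with `s d = s_d`, all components positive) and
`0 < r < min(ρ₁,...,ρ_N)`. -/
theorem nagumoNorm_momentDerivX (N : ℕ) (d : Fin N) (sd : ℝ) (hsd : 0 < sd)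
    (m : ℕ → ℝ) (hm : IsRegularMomentSeq m sd) :
    ∃ C : ℝ, 0 < C ∧
      ∀ (ρ : Fin N → ℝ), (∀ e, 0 < ρ e) →
      ∀ f : (Fin N → ℕ) → ℂ, AnalyticCoeffs ρ f →
      ∀ α : Fin N → ℝ, (∀ e, 1 ≤ α e) →
      ∀ s : Fin N → ℝ, (∀ e, 0 < s e) → s d = sd →
      ∀ r : ℝ, 0 < r → (∀ e, r < ρ e) →
        nagumoNorm (momentDerivX d m f) (α + Pi.single d 1) r s ≤
          C * α d ^ sd * nagumoNorm f α r s :=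
  nagumoNorm_momentDerivX_general N d sd m hm
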